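/- arXiv:2509.11806 — 3 statements merged into one kernel-verified Lean document; each statement's English description precedes it below -/
import Mathlib

section
/- Let (G, ν) be a computable numbered group with ν injective. Then G is amenable (for every integer n ≥ 1 and every finite D ⊆ G there exists a (1/n)-Følner set with respect to D) if and only if (G, ν) admits a computable Følner sequence, i.e., a computable sequence (F_j)_{j∈ℕ} of nonempty finite subsets of ℕ such that for every g ∈ G, |ν(F_j) \ g·ν(F_j)| / |ν(F_j)| → 0 as j → ∞. -/
/-!
For each `j`, amenability provides a `1/(j+1)`-Følner set with respect to `ν {0, …, j}`. Pulled
back along the injective numbering, this becomes a condition on a finite set of indices which only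
involves `mul` and finitely many comparisons of natural numbers, hence is decidable on canonical
indices; an unbounded search therefore finds such a set computably, and these sets form a Følner
sequence. Conversely, the sets of any Følner sequence are eventually `1/n`-Følner with respect to
any finite `D`.
-/

open Filter Topology

/-- `F` is a `(1/n)`-Følner set with respect to `D`:
`F` is nonempty and `|F \ xF| ≤ |F|/n` for every `x ∈ D`. -/
def IsFolner {G : Type} [Group G] [DecidableEq G] (n : ℕ) (D F : Finset G) : Prop :=
  F.Nonempty ∧ ∀ x ∈ D, n * (F \ F.image (x * ·)).card ≤ F.card

open Denumerable

namespace Computable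

variable {α β σ : Type} [Primcodable α] [Primcodable β] [Primcodable σ]

theorem list_map {f : α → List β} {g : α → β → σ} (hf : Computable f) (hg : Computable₂ g) :
    Computable fun a => (f a).map (g a) := by
  have hstep : Computable₂ fun a (p : ℕ × List σ) => p.2 ++ ((f a)[p.1]?.map (g a)).toList :=
    list_append.comp (snd.comp snd) <| Primrec.optionToList.to_comp.comp <|
      option_map (list_getElem?.comp (hf.comp fst) (fst.comp snd)) (hg.comp (fst.comp fst) snd)
  refine (nat_rec (list_length.comp hf) (const []) hstep).of_eq fun a => ?_
  suffices ∀ k, Nat.rec (motive := fun _ => List σ) []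
      (fun k acc => acc ++ ((f a)[k]?.map (g a)).toList) k = ((f a).take k).map (g a) by
    simpa using this (f a).length
  intro k
  induction k with
  | zero => simp
  | succ k ih => cases h : (f a)[k]? <;> simp [ih, List.take_add_one, h]

theorem nat_find {p : α → ℕ → Prop} [∀ a, DecidablePred (p a)]
    (hp : Computable₂ fun a n => decide (p a n)) (H : ∀ a, ∃ n, p a n) :
    Computable fun a => Nat.find (H a) := by
  refine Partrec.of_eq_tot (Partrec.rfind hp.partrec₂) fun a => Nat.mem_rfind.2 ⟨?_, fun hm => ?_⟩
  · simpa using Nat.find_spec (H a)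
  · simpa using Nat.find_min (H a) hm

end Computable

theorem Primrec.denumerable_raise' : Primrec₂ raise' := by
  have hfold : Primrec₂ fun (l : List ℕ) (n : ℕ) =>
      (l.foldl (fun (s : ℕ × List ℕ) m => (m + s.1 + 1, s.2 ++ [m + s.1])) (n, [])).2 := by
    have hadd : Primrec₂ fun (_ : List ℕ × ℕ) (p : (ℕ × List ℕ) × ℕ) => p.2 + p.1.1 :=
      Primrec.nat_add.comp (Primrec.snd.comp Primrec.snd)
        (Primrec.fst.comp (Primrec.fst.comp Primrec.snd))
    exact Primrec.snd.comp <| Primrec.list_foldl Primrec.fst (Primrec.snd.pair (Primrec.const []))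
      ((Primrec.succ.comp hadd).pair (Primrec.list_concat.comp
        (Primrec.snd.comp (Primrec.fst.comp Primrec.snd)) hadd)).to₂
  refine hfold.of_eq fun l n => ?_
  suffices ∀ acc, (l.foldl (fun (s : ℕ × List ℕ) m => (m + s.1 + 1, s.2 ++ [m + s.1])) (n, acc)).2
      = acc ++ raise' l n from this []
  induction l generalizing n with
  | nil => simp [raise']
  | cons m l ih => intro acc; simp [raise', ih]

theorem Primrec.finset_sort_nat : Primrec fun s : Finset ℕ => s.sort := by
  refine (Primrec.denumerable_raise'.comp ((Primrec.ofNat _).comp Primrec.encode)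
    (Primrec.const 0)).of_eq fun s => ?_
  -- `Finset ℕ` is encoded through the gap list `lower'` of its sorted elements.
  change raise' (ofNat (List ℕ) (Encodable.encode (lower' (s.map (eqv ℕ).toEmbedding).sort 0))) 0
    = _
  rw [ofNat_encode, show (eqv ℕ).toEmbedding = Function.Embedding.refl ℕ from rfl, Finset.map_refl]
  exact raise_lower' (fun _ _ => Nat.zero_le _) (Finset.sortedLT_sort _)

theorem Computable.exists_of_forall_exists {α β : Type} [Primcodable α] [Denumerable β]
    {p : α → β → Prop} [∀ a, DecidablePred (p a)] (hp : Computable₂ fun a b => decide (p a b))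
    (H : ∀ a, ∃ b, p a b) : ∃ f : α → β, Computable f ∧ ∀ a, p a (f a) := by
  have H' (a : α) : ∃ n, p a (ofNat β n) :=
    let ⟨b, hb⟩ := H a; ⟨Encodable.encode b, by rwa [ofNat_encode]⟩
  exact ⟨fun a => ofNat β (Nat.find (H' a)),
    (Computable.ofNat β).comp (Computable.nat_find (hp.comp Computable.fst
      ((Computable.ofNat β).comp Computable.snd)).to₂ H'),
    fun a => Nat.find_spec (H' a)⟩

/-- `ν '' S` is a `1/n`-Følner set with respect to `ν {0, …, n-1}`, read through the numbering. -/
def IsFolnerCode (mul : ℕ → ℕ → ℕ) (n : ℕ) (S : Finset ℕ) : Prop :=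
  S.Nonempty ∧ ∀ i < n, n * (S \ S.image (mul i)).card ≤ S.card

instance (mul : ℕ → ℕ → ℕ) (n : ℕ) : DecidablePred (IsFolnerCode mul n) :=
  fun _ => inferInstanceAs (Decidable (_ ∧ _))

theorem Finset.card_sdiff_eq_length_filter_sort {α : Type*} [LinearOrder α] (S T : Finset α) :
    (S \ T).card = (S.sort.filter fun x => x ∉ T).length := by
  rw [Finset.sdiff_eq_filter, Finset.card_def, Finset.filter_val, ← Finset.sort_eq (r := (· ≤ ·)),
    Multiset.filter_coe, Multiset.coe_card]

theorem PrimrecRel.list_mem {α : Type} [Primcodable α] :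
    PrimrecRel fun (a : α) (l : List α) => a ∈ l :=
  (PrimrecRel.exists_mem_list Primrec.eq).swap.of_eq fun a l => by simp [Function.swap]

theorem isFolnerCode_iff_sort (mul : ℕ → ℕ → ℕ) (n : ℕ) (S : Finset ℕ) :
    IsFolnerCode mul n S ↔ S.sort ≠ [] ∧ ∀ row ∈ (List.range n).map fun i => S.sort.map (mul i),
      n * (S.sort.filter fun x => x ∉ row).length ≤ S.sort.length := by
  have hne : S.sort ≠ [] ↔ S.Nonempty := by
    rw [ne_eq, ← List.length_eq_zero_iff, Finset.length_sort, Finset.card_eq_zero,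
      Finset.nonempty_iff_ne_empty]
  have hrow (i : ℕ) : (S.sort.filter fun x => x ∉ S.sort.map (mul i)).length =
      (S \ S.image (mul i)).card := by
    rw [Finset.card_sdiff_eq_length_filter_sort]
    congr 2 with x
    simp
  simp only [IsFolnerCode, hne, List.forall_mem_map, List.mem_range, hrow, Finset.length_sort]

theorem computable₂_decide_isFolnerCode {mul : ℕ → ℕ → ℕ} (hmul : Computable₂ mul) :
    Computable₂ fun n S => decide (IsFolnerCode mul n S) := by
  have hrow : PrimrecRel fun (row : List ℕ) (p : ℕ × List ℕ) =>
      p.1 * (p.2.filter fun x => x ∉ row).length ≤ p.2.length :=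
    Primrec.nat_le.comp₂ (Primrec.nat_mul.comp₂ (Primrec.fst.comp Primrec.snd)
      (Primrec.list_length.comp ((PrimrecRel.listFilter PrimrecRel.list_mem.not).comp
        (Primrec.snd.comp Primrec.snd) Primrec.fst)).to₂)
      (Primrec.list_length.comp (Primrec.snd.comp Primrec.snd)).to₂
  have hsort : Computable fun p : ℕ × Finset ℕ => p.2.sort :=
    Primrec.finset_sort_nat.to_comp.comp Computable.snd
  have hrows : Computable fun p : ℕ × Finset ℕ =>
      (List.range p.1).map fun i => p.2.sort.map (mul i) :=
    Computable.list_map (Primrec.list_range.to_comp.comp Computable.fst)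
      (Computable.list_map (hsort.comp Computable.fst)
        (hmul.comp (Computable.snd.comp Computable.fst) Computable.snd).to₂).to₂
  have hQ : PrimrecPred fun q : (ℕ × List ℕ) × List (List ℕ) => q.1.2 ≠ [] ∧
      ∀ row ∈ q.2, q.1.1 * (q.1.2.filter fun x => x ∉ row).length ≤ q.1.2.length :=
    (Primrec.eq.not.comp (Primrec.snd.comp Primrec.fst) (Primrec.const [])).and
      ((PrimrecRel.forall_mem_list hrow).comp Primrec.snd Primrec.fst)
  exact (hQ.decide.to_comp.comp ((Computable.fst.pair hsort).pair hrows)).of_eq fun p =>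
    decide_eq_decide.2 (isFolnerCode_iff_sort mul p.1 p.2).symm

section Folner

variable {G : Type} [Group G] [DecidableEq G]

noncomputable def folnerRatio (g : G) (F : Finset G) : ℝ :=
  ((F \ F.image (g * ·)).card : ℝ) / F.card

theorem isFolner_iff_forall_mul_folnerRatio_le_one {n : ℕ} {D F : Finset G} (hF : F.Nonempty) :
    IsFolner n D F ↔ ∀ x ∈ D, n * folnerRatio x F ≤ 1 := by
  have hpos : (0 : ℝ) < F.card := by exact_mod_cast hF.card_pos
  refine (and_iff_right hF).trans (forall₂_congr fun x _ => ?_)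
  rw [folnerRatio, ← mul_div_assoc, div_le_one hpos]
  exact_mod_cast Iff.rfl

theorem exists_isFolner_of_tendsto_folnerRatio {F : ℕ → Finset G} (hne : ∀ j, (F j).Nonempty)
    (hF : ∀ g, Tendsto (fun j => folnerRatio g (F j)) atTop (𝓝 0)) (n : ℕ) (D : Finset G) :
    ∃ F, IsFolner n D F := by
  have hev : ∀ᶠ j in atTop, ∀ x ∈ D, n * folnerRatio x (F j) < 1 :=
    (eventually_all_finset D).2 fun x _ =>
      ((hF x).const_mul (n : ℝ)).eventually_lt_const (by simp)
  obtain ⟨j, hj⟩ := hev.exists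
  exact ⟨F j, (isFolner_iff_forall_mul_folnerRatio_le_one (hne j)).2 fun x hx => (hj x hx).le⟩

theorem tendsto_folnerRatio_of_isFolner {F D : ℕ → Finset G}
    (hF : ∀ j, IsFolner (j + 1) (D j) (F j)) (hD : ∀ g, ∀ᶠ j in atTop, g ∈ D j) (g : G) :
    Tendsto (fun j => folnerRatio g (F j)) atTop (𝓝 0) := by
  refine squeeze_zero' (Eventually.of_forall fun j => by unfold folnerRatio; positivity)
    ((hD g).mono fun j hg => ?_) tendsto_one_div_add_atTop_nhds_zero_nat
  rw [le_div_iff₀' (by positivity)]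
  exact_mod_cast (isFolner_iff_forall_mul_folnerRatio_le_one (hF j).1).1 (hF j) g hg

theorem isFolner_image_iff_isFolnerCode {ν : ℕ → G} (hinj : Function.Injective ν)
    {mul : ℕ → ℕ → ℕ} (hmul : ∀ i j, ν (mul i j) = ν i * ν j) (n : ℕ) (S : Finset ℕ) :
    IsFolner n ((Finset.range n).image ν) (S.image ν) ↔ IsFolnerCode mul n S := by
  have htranslate (i : ℕ) : (S.image ν).image (ν i * ·) = (S.image (mul i)).image ν := by
    simp only [Finset.image_image, Function.comp_def, hmul]
  simp only [IsFolner, IsFolnerCode, Finset.image_nonempty, Finset.forall_mem_image,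
    Finset.mem_range, htranslate, ← Finset.image_sdiff _ _ hinj,
    Finset.card_image_of_injective _ hinj]

end Folner

theorem stmt4_general (G : Type) [Group G] [DecidableEq G] (ν : ℕ → G)
    (hsurj : Function.Surjective ν) (hinj : Function.Injective ν)
    (mul : ℕ → ℕ → ℕ)
    (hmulc : Computable₂ mul)
    (hmulν : ∀ i j, ν (mul i j) = ν i * ν j) :
    -- G is amenable
    (∀ n : ℕ, 1 ≤ n → ∀ D : Finset G, ∃ F : Finset G, IsFolner n D F)
    ↔
    -- (G, ν) admits a computable Følner sequence
    (∃ F : ℕ → Finset ℕ, Computable F ∧ (∀ j, (F j).Nonempty) ∧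
      ∀ g : G, Tendsto
        (fun j : ℕ => ((((F j).image ν) \ (((F j).image ν).image (g * ·))).card : ℝ) /
          ((F j).image ν).card)
        atTop (nhds 0)) := by
  constructor
  · intro amenable
    have hcode (j : ℕ) : ∃ S, IsFolnerCode mul (j + 1) S := by
      obtain ⟨F, hF⟩ := amenable (j + 1) j.succ_pos ((Finset.range (j + 1)).image ν)
      refine ⟨F.preimage ν hinj.injOn, (isFolner_image_iff_isFolnerCode hinj hmulν _ _).1 ?_⟩
      rwa [Finset.image_preimage_of_bijective _ ⟨hinj, hsurj⟩]
    have hdecide : Computable₂ fun j S => decide (IsFolnerCode mul (j + 1) S) :=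
      ((computable₂_decide_isFolnerCode hmulc).comp (Computable.succ.comp Computable.fst)
        Computable.snd).to₂
    obtain ⟨F, hFc, hF⟩ := Computable.exists_of_forall_exists hdecide hcode
    refine ⟨F, hFc, fun j => (hF j).1, tendsto_folnerRatio_of_isFolner
      (fun j => (isFolner_image_iff_isFolnerCode hinj hmulν _ _).2 (hF j)) fun g => ?_⟩
    obtain ⟨i, rfl⟩ := hsurj g
    exact eventually_atTop.2 ⟨i, fun j hj =>
      Finset.mem_image_of_mem ν (Finset.mem_range.2 (Nat.lt_succ_of_le hj))⟩
  · rintro ⟨F, -, hne, hF⟩ n - D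
    exact exists_isFolner_of_tendsto_folnerRatio (fun j => (hne j).image ν) hF n D

theorem stmt4 (G : Type) [Group G] [DecidableEq G] (ν : ℕ → G)
    (hsurj : Function.Surjective ν) (hinj : Function.Injective ν)
    (mul : ℕ → ℕ → ℕ) (inv : ℕ → ℕ)
    (hmulc : Computable₂ mul) (hinvc : Computable inv)
    (hmulν : ∀ i j, ν (mul i j) = ν i * ν j) (hinvν : ∀ i, ν (inv i) = (ν i)⁻¹)
    (hcomp : ComputablePred fun p : ℕ × ℕ => ν p.1 = ν p.2) :
    -- G is amenable
    (∀ n : ℕ, 1 ≤ n → ∀ D : Finset G, ∃ F : Finset G, IsFolner n D F)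
    ↔
    -- (G, ν) admits a computable Følner sequence
    (∃ F : ℕ → Finset ℕ, Computable F ∧ (∀ j, (F j).Nonempty) ∧
      ∀ g : G, Tendsto
        (fun j : ℕ => ((((F j).image ν) \ (((F j).image ν).image (g * ·))).card : ℝ) /
          ((F j).image ν).card)
        atTop (nhds 0)) :=
  stmt4_general G ν hsurj hinj mul hmulc hmulν
end

section
/- There exists a computable function x₀ : ℤ → {0,1} such that, setting m_j(x₀) = (∑_{i=−j}^{j} x₀(i)) / (2j+1) for j ∈ ℕ: (a) m_j(x₀) → 0 as j → ∞; and (b) for every primitive recursive function f : ℕ → ℕ there exist an integer k ≥ 1 and j > f(k) with m_j(x₀) ≥ 1/k. In particular, the convergence modulus of (m_j(x₀)) is not bounded by any primitive recursive function. -/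
/-!
Let `s k = ack (2k+3) (2k+3)` and let `x₀` be the indicator of the blocks
`(k·s k, (k+1)·s k] ⊆ ℕ`. At the right end `j = (k+1)·s k` of block `k` the mean is at least
`1/(2k+3)`, and `j ≥ ack (2k+3) (2k+3) > f (2k+3)` as soon as `f < ack k` pointwise, which
holds for large `k` whenever `f` is primitive recursive. Conversely, `s` at least doubles at each
step, so the blocks up to `k+1` hold at most `2·s (k+1)` points; hence from the start of block
`k+1` on the mean is at most `1/(k+1)`.
-/

open Filter Topology

/-- The mean over the Følner set `F_j = {-j, …, j}` of `ℤ` applied to `x : ℤ → {0,1}`: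
`m_j(x) = (∑_{i=-j}^{j} x(i)) / (2j+1)`. -/
noncomputable def folnerMean (x : ℤ → Bool) (j : ℕ) : ℝ :=
  (∑ i ∈ Finset.Icc (-(j : ℤ)) (j : ℤ), (if x i then (1 : ℝ) else 0)) / (2 * j + 1)

open Finset

theorem Computable.decide_exists_lt {α : Type*} [Primcodable α] {f : α → ℕ}
    {p : α → ℕ → Bool} (hf : Computable f) (hp : Computable₂ p) :
    Computable fun a => decide (∃ k < f a, p a k) := by
  refine (Computable.nat_rec hf (Computable.const false)
    (h := fun a (q : ℕ × Bool) => q.2 || p a q.1)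
    (Primrec.or.to_comp.comp (Computable.snd.comp Computable.snd)
      (hp.comp Computable.fst (Computable.fst.comp Computable.snd))).to₂).of_eq fun a => ?_
  induction f a with
  | zero => simp
  | succ n ih =>
    simp only [ih]
    rw [Bool.eq_iff_iff]
    simp [Nat.le_iff_lt_or_eq, or_and_right, exists_or]

-- `ℤ` is encoded by `n ↦ 2n` and `-(n+1) ↦ 2n+1`.
theorem Primrec.int_toNat : Primrec Int.toNat := by
  refine (Primrec.cond (Primrec.nat_bodd.comp Primrec.encode) (Primrec.const 0)
    (Primrec.nat_div2.comp Primrec.encode)).of_eq fun i => ?_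
  cases i with
  | ofNat n => show (bif (2 * n).bodd then 0 else (2 * n).div2) = n; simp
  | negSucc n => show (bif (2 * n + 1).bodd then 0 else (2 * n + 1).div2) = 0; simp

theorem Nat.exists_ge_and_not_succ {P : ℕ → Prop} {K d : ℕ} (hK : P K) (hd : ¬P (K + d)) :
    ∃ K' ≥ K, P K' ∧ ¬P (K' + 1) := by
  induction d generalizing K with
  | zero => exact absurd hK hd
  | succ d ih =>
    by_cases h : P (K + 1)
    · obtain ⟨K', hK', h'⟩ := ih h (by rwa [add_right_comm])
      exact ⟨K', by omega, h'⟩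
    · exact ⟨K, le_rfl, hK, h⟩

theorem Finset.sum_range_succ_le_two_mul {a : ℕ → ℕ} (ha : ∀ k, 2 * a k ≤ a (k + 1)) (n : ℕ) :
    ∑ k ∈ range (n + 1), a k ≤ 2 * a n := by
  induction n with
  | zero => simp only [zero_add, sum_range_one]; omega
  | succ n ih => rw [sum_range_succ]; have := ha n; omega

theorem folnerMean_comp_toNat {p : ℕ → Bool} (hp : p 0 = false) (j : ℕ) :
    folnerMean (fun i => p i.toNat) j = #{n ∈ range (j + 1) | p n} / (2 * j + 1) := by
  rw [folnerMean, sum_boole]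
  congr 2
  refine card_nbij' Int.toNat Nat.cast ?_ ?_ ?_ ?_
  all_goals intro i hi
  all_goals simp only [coe_filter, Set.mem_ofPred_eq, mem_Icc, mem_range] at hi ⊢
  · exact ⟨by omega, hi.2⟩
  · simpa using ⟨by omega, hi.2⟩
  · obtain ⟨-, hpi⟩ := hi
    rcases le_or_gt 0 i with h | h
    · exact Int.toNat_of_nonneg h
    · simp [Int.toNat_of_nonpos h.le, hp] at hpi
  · simp

theorem folnerMean_nonneg (x : ℤ → Bool) (j : ℕ) : 0 ≤ folnerMean x j := by
  unfold folnerMean; positivity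

namespace SlowFolnerConvergence

def scale (k : ℕ) : ℕ := ack (2 * k + 3) (2 * k + 3)

theorem computable_scale : Computable scale := by
  have h : Computable fun k : ℕ => 2 * k + 3 :=
    (Primrec.nat_add.comp Primrec.nat_double (Primrec.const 3)).to_comp
  exact computable₂_ack.comp h h

theorem scale_pos (k : ℕ) : 0 < scale k := ack_pos _ _

theorem scale_mono : Monotone scale := fun _ _ h => ack_le_ack (by omega) (by omega)

theorem two_mul_scale_le (k : ℕ) : 2 * scale k ≤ scale (k + 1) := by
  have h := ack_ack_lt_ack_max_add_two 2 (2 * k + 3) (2 * k + 3)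
  rw [ack_two, max_eq_right (by omega)] at h
  have h' : ack (2 * k + 3 + 2) (2 * k + 3) ≤ scale (k + 1) := ack_le_ack (by omega) (by omega)
  unfold scale at *
  omega

def block (k : ℕ) : Finset ℕ := Ioc (k * scale k) ((k + 1) * scale k)

theorem card_block (k : ℕ) : #(block k) = scale k := by
  simp [block, add_mul]

theorem lt_of_mem_block {k n : ℕ} (h : n ∈ block k) : k < n := by
  have := scale_pos k
  have := (mem_Ioc.1 h).1
  nlinarith

def hit (n : ℕ) : Bool := decide (∃ k < n, n ∈ block k)

theorem hit_iff {n : ℕ} : hit n ↔ ∃ k, n ∈ block k := by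
  simp only [hit, decide_eq_true_eq]
  exact ⟨fun ⟨k, _, h⟩ => ⟨k, h⟩, fun ⟨k, h⟩ => ⟨k, lt_of_mem_block h, h⟩⟩

theorem hit_zero : hit 0 = false := by
  simp [hit]

theorem computable_hit : Computable hit := by
  have hlo : Computable fun q : ℕ × ℕ => q.2 * scale q.2 :=
    Primrec.nat_mul.to_comp.comp Computable.snd (computable_scale.comp Computable.snd)
  have hhi : Computable fun q : ℕ × ℕ => (q.2 + 1) * scale q.2 :=
    Primrec.nat_mul.to_comp.comp (Primrec.succ.to_comp.comp Computable.snd)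
      (computable_scale.comp Computable.snd)
  have hblock : Computable₂ fun n k => decide (n ∈ block k) :=
    (Primrec.and.to_comp.comp (Primrec.nat_lt.decide.to_comp.comp hlo Computable.fst)
      (Primrec.nat_le.decide.to_comp.comp Computable.fst hhi)).of_eq fun q => by simp [block]
  exact (Computable.decide_exists_lt Computable.id hblock).of_eq fun n => by simp [hit]

def x₀ (i : ℤ) : Bool := hit i.toNat

theorem computable_x₀ : Computable x₀ :=
  computable_hit.comp Primrec.int_toNat.to_comp

theorem folnerMean_x₀_eq (j : ℕ) :
    folnerMean x₀ j = #{n ∈ range (j + 1) | hit n} / (2 * j + 1) :=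
  folnerMean_comp_toNat hit_zero j

theorem scale_le_card_hit (K : ℕ) : scale K ≤ #{n ∈ range ((K + 1) * scale K + 1) | hit n} := by
  refine (card_block K).symm.trans_le <|
    card_le_card fun n hn => mem_filter.2 ⟨?_, hit_iff.2 ⟨K, hn⟩⟩
  simp only [block, mem_Ioc] at hn
  exact mem_range.2 (by omega)

theorem card_hit_le {K j : ℕ} (hj : j < (K + 2) * scale (K + 2)) :
    #{n ∈ range (j + 1) | hit n} ≤ 2 * scale (K + 1) := by
  calc #{n ∈ range (j + 1) | hit n} ≤ #((range (K + 2)).biUnion block) := by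
        refine card_le_card fun n hn => ?_
        obtain ⟨hnj, hn⟩ := mem_filter.1 hn
        obtain ⟨k, hk⟩ := hit_iff.1 hn
        refine mem_biUnion.2 ⟨k, mem_range.2 ?_, hk⟩
        by_contra! hKk
        have := Nat.mul_le_mul hKk (scale_mono hKk)
        simp only [block, mem_Ioc, mem_range] at hk hnj
        omega
    _ ≤ ∑ k ∈ range (K + 2), #(block k) := card_biUnion_le
    _ ≤ 2 * scale (K + 1) := by
        simp only [card_block]
        exact sum_range_succ_le_two_mul two_mul_scale_le (K + 1)

theorem one_div_le_folnerMean_x₀ (K : ℕ) :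
    1 / (2 * K + 3 : ℝ) ≤ folnerMean x₀ ((K + 1) * scale K) := by
  rw [folnerMean_x₀_eq, div_le_div_iff₀ (by positivity) (by positivity)]
  have hs : (1 : ℝ) ≤ scale K := by exact_mod_cast scale_pos K
  have hc : (scale K : ℝ) ≤ #{n ∈ range ((K + 1) * scale K + 1) | hit n} := by
    exact_mod_cast scale_le_card_hit K
  push_cast
  nlinarith

theorem folnerMean_x₀_le {K j : ℕ} (hjK : (K + 1) * scale (K + 1) ≤ j)
    (hj : j < (K + 2) * scale (K + 2)) : folnerMean x₀ j ≤ 1 / (K + 1 : ℝ) := by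
  rw [folnerMean_x₀_eq, div_le_div_iff₀ (by positivity) (by positivity)]
  have hc : (#{n ∈ range (j + 1) | hit n} : ℝ) ≤ 2 * scale (K + 1) := by
    exact_mod_cast card_hit_le hj
  have hjK' : ((K + 1) * scale (K + 1) : ℝ) ≤ j := by exact_mod_cast hjK
  nlinarith

theorem folnerMean_x₀_le_of_le {K j : ℕ} (hjK : (K + 1) * scale (K + 1) ≤ j) :
    folnerMean x₀ j ≤ 1 / (K + 1 : ℝ) := by
  have hbig : ¬(K + j + 1) * scale (K + j + 1) ≤ j := by
    have := Nat.le_mul_of_pos_right (K + j + 1) (scale_pos (K + j + 1))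
    omega
  obtain ⟨K', hKK', hjK', hj⟩ := Nat.exists_ge_and_not_succ
    (P := fun k => (k + 1) * scale (k + 1) ≤ j) hjK hbig
  calc folnerMean x₀ j ≤ 1 / (K' + 1 : ℝ) := folnerMean_x₀_le hjK' (not_le.1 hj)
    _ ≤ 1 / (K + 1 : ℝ) := by gcongr

theorem tendsto_folnerMean_x₀ : Tendsto (folnerMean x₀) atTop (𝓝 0) := by
  refine tendsto_order.2 ⟨fun a ha => .of_forall fun j => ha.trans_le (folnerMean_nonneg x₀ j),
    fun b hb => ?_⟩
  obtain ⟨K, hK⟩ := exists_nat_one_div_lt hb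
  filter_upwards [eventually_ge_atTop ((K + 1) * scale (K + 1))] with j hj
  exact (folnerMean_x₀_le_of_le hj).trans_lt (by exact_mod_cast hK)

theorem exists_lt_folnerMean_x₀ {f : ℕ → ℕ} (hf : Nat.Primrec f) :
    ∃ k : ℕ, 1 ≤ k ∧ ∃ j : ℕ, f k < j ∧ (1 / k : ℝ) ≤ folnerMean x₀ j := by
  obtain ⟨m, hm⟩ := exists_lt_ack_of_nat_primrec hf
  refine ⟨2 * m + 3, by omega, (m + 1) * scale m, ?_,
    by exact_mod_cast one_div_le_folnerMean_x₀ m⟩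
  calc f (2 * m + 3) < ack m (2 * m + 3) := hm _
    _ ≤ scale m := ack_le_ack (by omega) le_rfl
    _ ≤ (m + 1) * scale m := Nat.le_mul_of_pos_left _ m.succ_pos

end SlowFolnerConvergence

open SlowFolnerConvergence in
theorem stmt8 :
    ∃ x₀ : ℤ → Bool, Computable x₀ ∧
      Tendsto (fun j : ℕ => folnerMean x₀ j) atTop (nhds 0) ∧
      ∀ f : ℕ → ℕ, Nat.Primrec f →
        ∃ k : ℕ, 1 ≤ k ∧ ∃ j : ℕ, f k < j ∧ (1 / k : ℝ) ≤ folnerMean x₀ j :=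
  ⟨x₀, computable_x₀, tendsto_folnerMean_x₀, fun _ => exists_lt_folnerMean_x₀⟩
end

section
/- Let G be a countable group and ν : ℕ → G a surjection such that the set {(w, w') ∈ F_ℕ × F_ℕ : ν̄(w) = ν̄(w')} is computably enumerable, where F_ℕ is the free group on the countable generating set ℕ and ν̄ : F_ℕ → G is the group homomorphism extending ν. Then there exist a group structure (ℕ, ⋆, ⁻¹, e) on the natural numbers whose multiplication and inverse are computable functions, and a surjective group homomorphism ν⁰ : (ℕ, ⋆, ⁻¹, e) → G such that the set {(a, b) ∈ ℕ² : ν⁰(a) = ν⁰(b)} is computably enumerable. -/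
/-!
A reduced word over ℕ is a list of letters `(x, b) : ℕ × Bool` in which no letter is followed by
its inverse `(x, !b)`. Code letters by `2 * x + b`. A list of codes in which no entry `a` is
followed by `f a` is determined by its first entry and, for each later entry, its rank in
`ℕ \ {f (previous entry)}`, and every list of such data occurs. This gives a bijection `ℕ ≃ F_ℕ` that is
primitive recursive on words in both directions. Transporting the group law of `F_ℕ` along it
gives computable operations on ℕ. `ν⁰` is `ν̄` composed with the bijection, so its equality set
is the word problem of `G` pulled back along a computable map.
-/

namespace AvoidingList

def skip (k d : ℕ) : ℕ := if d < k then d else d + 1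

def unskip (k q : ℕ) : ℕ := if q < k then q else q - 1

lemma unskip_skip (k d : ℕ) : unskip k (skip k d) = d := by
  unfold skip unskip; split_ifs <;> omega

lemma skip_ne (k d : ℕ) : skip k d ≠ k := by
  unfold skip; split_ifs <;> omega

lemma skip_unskip {k q : ℕ} (h : q ≠ k) : skip k (unskip k q) = q := by
  unfold skip unskip; split_ifs <;> omega

lemma primrec_skip : Primrec₂ skip :=
  Primrec.ite (Primrec.nat_lt.comp Primrec.snd Primrec.fst) Primrec.snd
    (Primrec.succ.comp Primrec.snd)

lemma primrec_unskip : Primrec₂ unskip :=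
  Primrec.ite (Primrec.nat_lt.comp Primrec.snd Primrec.fst) Primrec.snd
    (Primrec.pred.comp Primrec.snd)

variable (f : ℕ → ℕ)

abbrev Avoids (l : List ℕ) : Prop := l.IsChain fun a b => b ≠ f a

def decodeAfter : ℕ → List ℕ → List ℕ
  | _, [] => []
  | p, d :: ds => skip (f p) d :: decodeAfter (skip (f p) d) ds

def decode : List ℕ → List ℕ
  | [] => []
  | c :: ds => c :: decodeAfter f c ds

-- `encode qs` still starts with the head of `qs`, which is then re-coded relative to `q`.
def encode : List ℕ → List ℕ
  | [] => []
  | q :: qs => q :: (encode qs).modifyHead (unskip (f q))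

variable {f}

lemma avoids_cons_decodeAfter (p : ℕ) (ds : List ℕ) : Avoids f (p :: decodeAfter f p ds) := by
  induction ds generalizing p with
  | nil => exact .singleton p
  | cons d ds ih => exact List.isChain_cons_cons.2 ⟨skip_ne _ _, ih _⟩

lemma avoids_decode (ds : List ℕ) : Avoids f (decode f ds) := by
  cases ds with
  | nil => exact .nil
  | cons c ds => exact avoids_cons_decodeAfter c ds

lemma encode_decodeAfter (p : ℕ) (ds : List ℕ) :
    encode f (decodeAfter f p ds) = ds.modifyHead (skip (f p)) := by
  induction ds generalizing p with
  | nil => rfl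
  | cons d ds ih =>
    cases ds <;> simp_all [decodeAfter, encode, unskip_skip]

lemma encode_decode (ds : List ℕ) : encode f (decode f ds) = ds := by
  cases ds with
  | nil => rfl
  | cons c ds =>
    simp only [decode, encode, encode_decodeAfter, List.modifyHead_modifyHead]
    cases ds <;> simp [unskip_skip]

lemma decodeAfter_modifyHead_encode {p : ℕ} {qs : List ℕ} (h : Avoids f (p :: qs)) :
    decodeAfter f p ((encode f qs).modifyHead (unskip (f p))) = qs := by
  induction qs generalizing p with
  | nil => rfl
  | cons q qs ih =>
    obtain ⟨hpq, hqs⟩ := List.isChain_cons_cons.1 h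
    simp [encode, decodeAfter, skip_unskip hpq, ih hqs]

lemma decode_encode {qs : List ℕ} (h : Avoids f qs) : decode f (encode f qs) = qs := by
  cases qs with
  | nil => rfl
  | cons q qs => simp [encode, decode, decodeAfter_modifyHead_encode h]

variable (f) in
def equiv : List ℕ ≃ {l : List ℕ // Avoids f l} where
  toFun ds := ⟨decode f ds, avoids_decode ds⟩
  invFun l := encode f l
  left_inv := encode_decode
  right_inv l := Subtype.ext (decode_encode l.2)

-- `decode` as a left fold: the accumulator is the reversed output; its head is the previous entry.
variable (f) in
def decodeStep (acc : List ℕ) (d : ℕ) : List ℕ :=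
  (acc.head?.elim d fun p => skip (f p) d) :: acc

lemma foldl_decodeStep (p : ℕ) (acc ds : List ℕ) :
    ds.foldl (decodeStep f) (p :: acc) = (decodeAfter f p ds).reverse ++ p :: acc := by
  induction ds generalizing p acc with
  | nil => rfl
  | cons d ds ih => simp [decodeStep, decodeAfter, ih]

lemma decode_eq_foldl (ds : List ℕ) : decode f ds = (ds.foldl (decodeStep f) []).reverse := by
  cases ds with
  | nil => rfl
  | cons c ds => simp [decode, foldl_decodeStep, decodeStep]

lemma primrec_decode (hf : Primrec f) : Primrec (decode f) := by
  have hstep : Primrec₂ (decodeStep f) :=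
    (Primrec.list_cons.comp
      (Primrec.option_casesOn (Primrec.list_head?.comp Primrec.fst) Primrec.snd
        (primrec_skip.comp (hf.comp Primrec.snd) (Primrec.snd.comp Primrec.fst)).to₂)
      Primrec.fst).of_eq fun ⟨acc, d⟩ => by cases acc <;> rfl
  exact (Primrec.list_reverse.comp (Primrec.list_foldl .id (.const [])
    (hstep.comp (Primrec.fst.comp Primrec.snd) (Primrec.snd.comp Primrec.snd)).to₂)).of_eq
    fun ds => (decode_eq_foldl ds).symm

lemma primrec_encode (hf : Primrec f) : Primrec (encode f) := by
  have hstep : Primrec₂ fun q acc => q :: (acc : List ℕ).modifyHead (unskip (f q)) :=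
    Primrec.list_cons.comp Primrec.fst
      ((Primrec.list_modifyHead' (g := fun q => unskip (f q))
        (primrec_unskip.comp (hf.comp Primrec.fst) Primrec.snd)).comp Primrec.snd Primrec.fst)
  refine (Primrec.list_foldr .id (.const [])
    (hstep.comp (Primrec.fst.comp Primrec.snd) (Primrec.snd.comp Primrec.snd)).to₂).of_eq ?_
  intro l
  induction l with
  | nil => rfl
  | cons q qs ih => simp [encode, ← ih]

end AvoidingList

namespace FreeGroup

variable {α : Type*} [DecidableEq α]

def reducedWordsEquiv : {L : List (α × Bool) // IsReduced L} ≃ FreeGroup α where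
  toFun L := mk L
  invFun x := ⟨x.toWord, isReduced_toWord⟩
  left_inv L := Subtype.ext L.2.reduce_eq
  right_inv _ := mk_toWord

@[simp]
lemma toWord_reducedWordsEquiv (L : {L : List (α × Bool) // IsReduced L}) :
    (reducedWordsEquiv L).toWord = L :=
  L.2.reduce_eq

@[simp]
lemma reducedWordsEquiv_symm_apply (x : FreeGroup α) :
    reducedWordsEquiv.symm x = ⟨x.toWord, isReduced_toWord⟩ :=
  rfl

end FreeGroup

namespace Primrec

variable {α : Type*} [Primcodable α]

theorem freeGroup_reduce [DecidableEq α] : Primrec (FreeGroup.reduce (α := α)) := by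
  have hcancel : PrimrecRel fun (x y : α × Bool) => x.1 = y.1 ∧ x.2 = !y.2 :=
    (Primrec.eq.comp (fst.comp fst) (fst.comp snd)).and
      (Primrec.eq.comp (snd.comp fst) (Primrec.not.comp (snd.comp snd)))
  have hstep : Primrec₂ fun (x : α × Bool) (ih : List (α × Bool)) =>
      List.casesOn (motive := fun _ => List (α × Bool)) ih [x] fun hd tl =>
        if x.1 = hd.1 ∧ x.2 = !hd.2 then tl else x :: hd :: tl :=
    list_casesOn snd (list_cons.comp fst (const []))
      (Primrec.ite (hcancel.comp (fst.comp fst) (fst.comp snd)) (snd.comp snd)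
        (list_cons.comp (fst.comp fst) (list_cons.comp (fst.comp snd) (snd.comp snd)))).to₂
  exact (list_rec .id (const []) (hstep.comp (fst.comp snd) (snd.comp (snd.comp snd))).to₂).of_eq
    fun _ => rfl

theorem freeGroup_invRev : Primrec (FreeGroup.invRev (α := α)) :=
  list_reverse.comp (list_map .id (pair (fst.comp snd) (Primrec.not.comp (snd.comp snd))).to₂)

end Primrec

theorem REPred.comp {α β : Type*} [Primcodable α] [Primcodable β] {p : β → Prop} {f : α → β}
    (hp : REPred p) (hf : Computable f) : REPred fun a => p (f a) :=
  Partrec.comp hp hf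

section TransferredOperations

variable {α β : Type*} [Primcodable α] [Primcodable β] [DecidableEq β] {e : α ≃ FreeGroup β}

lemma Primrec₂.equiv_symm_mul_freeGroup (htoWord : Primrec fun a => (e a).toWord)
    (hmk : Primrec fun L => e.symm (FreeGroup.mk L)) :
    Primrec₂ fun a b => e.symm (e a * e b) :=
  (hmk.comp (Primrec.list_append.comp (htoWord.comp Primrec.fst)
    (htoWord.comp Primrec.snd))).of_eq fun _ => by simp [← FreeGroup.mul_mk, FreeGroup.mk_toWord]

lemma Primrec.equiv_symm_inv_freeGroup (htoWord : Primrec fun a => (e a).toWord)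
    (hmk : Primrec fun L => e.symm (FreeGroup.mk L)) :
    Primrec fun a => e.symm (e a)⁻¹ :=
  (hmk.comp (Primrec.freeGroup_invRev.comp htoWord)).of_eq fun _ => by
    simp [← FreeGroup.inv_mk, FreeGroup.mk_toWord]

end TransferredOperations

open FreeGroup

def letterEquiv : ℕ × Bool ≃ ℕ := (Equiv.prodComm ℕ Bool).trans Equiv.boolProdNatEquivNat

def invLetter (q : ℕ) : ℕ := letterEquiv ((letterEquiv.symm q).1, !(letterEquiv.symm q).2)

lemma primrec_letterEquiv : Primrec letterEquiv :=
  (Primrec.cond Primrec.snd (Primrec.succ.comp (Primrec.nat_mul.comp (.const 2) Primrec.fst))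
    (Primrec.nat_mul.comp (.const 2) Primrec.fst)).of_eq fun ⟨n, b⟩ => by
      cases b <;> simp [letterEquiv, Nat.bit_val]

lemma primrec_letterEquiv_symm : Primrec letterEquiv.symm :=
  Primrec.pair Primrec.nat_div2 Primrec.nat_bodd

lemma primrec_invLetter : Primrec invLetter :=
  primrec_letterEquiv.comp <| Primrec.pair (Primrec.fst.comp primrec_letterEquiv_symm)
    (Primrec.not.comp (Primrec.snd.comp primrec_letterEquiv_symm))

lemma invLetter_letterEquiv (x : ℕ × Bool) :
    invLetter (letterEquiv x) = letterEquiv (x.1, !x.2) := by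
  simp [invLetter]

lemma isReduced_iff_avoids_map_letterEquiv (L : List (ℕ × Bool)) :
    FreeGroup.IsReduced L ↔ AvoidingList.Avoids invLetter (L.map letterEquiv) := by
  have hrel : (fun a b => letterEquiv b ≠ invLetter (letterEquiv a)) =
      fun (a b : ℕ × Bool) => a.1 = b.1 → a.2 = b.2 := by
    ext ⟨m, s⟩ ⟨n, t⟩
    cases s <;> cases t <;> simp [invLetter_letterEquiv, eq_comm]
  rw [AvoidingList.Avoids, List.isChain_map, hrel, FreeGroup.IsReduced]

def natEquivFreeGroup : ℕ ≃ FreeGroup ℕ :=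
  (Denumerable.eqv (List ℕ)).symm.trans <| (AvoidingList.equiv invLetter).trans <|
    ((Equiv.listEquivOfEquiv letterEquiv).subtypeEquiv
      isReduced_iff_avoids_map_letterEquiv).symm.trans reducedWordsEquiv

lemma toWord_natEquivFreeGroup (n : ℕ) : (natEquivFreeGroup n).toWord =
    (AvoidingList.decode invLetter (Denumerable.ofNat (List ℕ) n)).map letterEquiv.symm := by
  simp [natEquivFreeGroup, AvoidingList.equiv, Equiv.listEquivOfEquiv, Denumerable.eqv]

lemma natEquivFreeGroup_symm_mk (L : List (ℕ × Bool)) : natEquivFreeGroup.symm (mk L) =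
    Encodable.encode (AvoidingList.encode invLetter ((reduce L).map letterEquiv)) := by
  simp [natEquivFreeGroup, AvoidingList.equiv, Equiv.listEquivOfEquiv, Denumerable.eqv]

lemma primrec_toWord_natEquivFreeGroup : Primrec fun n => (natEquivFreeGroup n).toWord :=
  (Primrec.list_map ((AvoidingList.primrec_decode primrec_invLetter).comp (Primrec.ofNat _))
    (primrec_letterEquiv_symm.comp Primrec.snd).to₂).of_eq fun n =>
      (toWord_natEquivFreeGroup n).symm

lemma primrec_natEquivFreeGroup_symm_mk : Primrec fun L => natEquivFreeGroup.symm (mk L) :=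
  (Primrec.encode.comp ((AvoidingList.primrec_encode primrec_invLetter).comp
    (Primrec.list_map Primrec.freeGroup_reduce (primrec_letterEquiv.comp Primrec.snd).to₂))).of_eq
      fun L => (natEquivFreeGroup_symm_mk L).symm

theorem stmt14 (G : Type) [Group G] (ν : ℕ → G)
    (hsurj : Function.Surjective ν)
    -- the word problem of G relative to ν, coded by words in List (ℕ × Bool),
    -- is computably enumerable
    (hce : REPred fun p : List (ℕ × Bool) × List (ℕ × Bool) =>
      (FreeGroup.lift ν) (FreeGroup.mk p.1) = (FreeGroup.lift ν) (FreeGroup.mk p.2)) :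
    -- there is a group structure on ℕ with computable operations and a surjective
    -- homomorphism ν⁰ onto G with computably enumerable equality set
    ∃ (mul : ℕ → ℕ → ℕ) (inv : ℕ → ℕ) (e : ℕ) (ν0 : ℕ → G),
      Computable₂ mul ∧ Computable inv ∧
      -- group axioms
      (∀ a b c : ℕ, mul (mul a b) c = mul a (mul b c)) ∧
      (∀ a : ℕ, mul e a = a) ∧ (∀ a : ℕ, mul a e = a) ∧
      (∀ a : ℕ, mul (inv a) a = e) ∧
      -- ν⁰ is a surjective homomorphism
      Function.Surjective ν0 ∧
      (∀ a b : ℕ, ν0 (mul a b) = ν0 a * ν0 b) ∧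
      (∀ a : ℕ, ν0 (inv a) = (ν0 a)⁻¹) ∧ ν0 e = 1 ∧
      -- the equality set is computably enumerable
      REPred fun p : ℕ × ℕ => ν0 p.1 = ν0 p.2 := by
  have htoWord := primrec_toWord_natEquivFreeGroup
  have hmk := primrec_natEquivFreeGroup_symm_mk
  set e := natEquivFreeGroup
  refine ⟨fun a b => e.symm (e a * e b), fun a => e.symm (e a)⁻¹, e.symm 1, fun n => lift ν (e n),
    (Primrec₂.equiv_symm_mul_freeGroup htoWord hmk).to_comp,
    (Primrec.equiv_symm_inv_freeGroup htoWord hmk).to_comp,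
    fun a b c => by simp [mul_assoc], fun a => by simp, fun a => by simp, fun a => by simp,
    fun g => ?_, fun a b => by simp, fun a => by simp, by simp, ?_⟩
  · obtain ⟨x, rfl⟩ := hsurj g
    exact ⟨e.symm (of x), by simp⟩
  · exact (hce.comp ((htoWord.comp Primrec.fst).pair (htoWord.comp Primrec.snd)).to_comp).of_eq
      fun p => by simp only [mk_toWord]
end
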